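/- Let I be a finite set, F ⊆ I a nonempty subset, a : I → ℝ, and c ∈ ℝ. Let Δ = c − ∑_{j ∈ F} a_j and define x* : I → ℝ by x*_i = a_i + Δ/|F| for i ∈ F and x*_i = a_i for i ∉ F. Then x* satisfies ∑_{i ∈ F} x*_i = c, every x : I → ℝ with ∑_{i ∈ F} x_i = c satisfies ∑_{i ∈ I} |x_i − a_i| ≥ |Δ|, and ∑_{i ∈ I} |x*_i − a_i| = |Δ|; hence x* is a minimizer of the ℓ₁ adjustment over this constraint set. -/

import Mathlib

/-- The incremental update: distribute the mismatch `Δ = c − ∑_{j ∈ F} a j` equally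
over the affected indices `F`, leaving the others unchanged. -/
noncomputable def incrementalUpdate {I : Type*} [DecidableEq I]
    (F : Finset I) (a : I → ℝ) (c : ℝ) : I → ℝ :=
  fun i => if i ∈ F then a i + (c - ∑ j ∈ F, a j) / F.card else a i

/-! Any `x` with `∑_F x = c` must move `a` by at least `|Δ|` in ℓ₁ on `F` alone, by the triangle
inequality; the equal split moves each of the `|F|` coordinates by `|Δ| / |F|` and nothing
else, so it attains the bound. -/

theorem Finset.abs_sum_sub_sum_le_sum_abs_sub {ι α : Type*} [Fintype ι] [AddCommGroup α]
    [LinearOrder α] [IsOrderedAddMonoid α] (s : Finset ι) (x a : ι → α) :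
    |∑ i ∈ s, x i - ∑ i ∈ s, a i| ≤ ∑ i, |x i - a i| :=
  calc |∑ i ∈ s, x i - ∑ i ∈ s, a i| = |∑ i ∈ s, (x i - a i)| := by
        rw [Finset.sum_sub_distrib]
    _ ≤ ∑ i ∈ s, |x i - a i| := Finset.abs_sum_le_sum_abs _ _
    _ ≤ ∑ i, |x i - a i| :=
        Finset.sum_le_sum_of_subset_of_nonneg (Finset.subset_univ s) fun i _ _ => abs_nonneg _

section IncrementalUpdate

variable {I : Type*} [DecidableEq I] (F : Finset I) (a : I → ℝ) (c : ℝ)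

theorem incrementalUpdate_sub_of_mem {i : I} (hi : i ∈ F) :
    incrementalUpdate F a c i - a i = (c - ∑ j ∈ F, a j) / F.card := by
  simp [incrementalUpdate, hi]

theorem incrementalUpdate_of_notMem {i : I} (hi : i ∉ F) : incrementalUpdate F a c i = a i := by
  simp [incrementalUpdate, hi]

variable {F}

theorem sum_incrementalUpdate (hF : F.Nonempty) : ∑ i ∈ F, incrementalUpdate F a c i = c := by
  have hcard : (F.card : ℝ) ≠ 0 := Nat.cast_ne_zero.mpr hF.card_pos.ne'
  calc ∑ i ∈ F, incrementalUpdate F a c i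
        = ∑ i ∈ F, a i + ∑ i ∈ F, (incrementalUpdate F a c i - a i) := by
          rw [Finset.sum_sub_distrib]; ring
    _ = ∑ i ∈ F, a i + F.card * ((c - ∑ j ∈ F, a j) / F.card) := by
          rw [Finset.sum_congr rfl fun i hi => incrementalUpdate_sub_of_mem F a c hi,
            Finset.sum_const, nsmul_eq_mul]
    _ = c := by field_simp; ring

theorem sum_abs_incrementalUpdate_sub [Fintype I] (hF : F.Nonempty) :
    ∑ i, |incrementalUpdate F a c i - a i| = |c - ∑ j ∈ F, a j| := by
  have hcard : (0 : ℝ) < F.card := Nat.cast_pos.mpr hF.card_pos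
  calc ∑ i, |incrementalUpdate F a c i - a i|
        = ∑ i ∈ F, |incrementalUpdate F a c i - a i| :=
          (Finset.sum_subset (Finset.subset_univ F) fun i _ hi => by
            rw [incrementalUpdate_of_notMem F a c hi, sub_self, abs_zero]).symm
    _ = F.card * (|c - ∑ j ∈ F, a j| / F.card) := by
          rw [Finset.sum_congr rfl fun i hi => by rw [incrementalUpdate_sub_of_mem F a c hi],
            Finset.sum_const, nsmul_eq_mul, abs_div, abs_of_pos hcard]
    _ = |c - ∑ j ∈ F, a j| := mul_div_cancel₀ _ hcard.ne'

end IncrementalUpdate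

/-- For a finite index set `I`, nonempty `F ⊆ I`, `a : I → ℝ` and
`c ∈ ℝ`, with `Δ = c − ∑_{j ∈ F} a j`, the equal-distribution update `x*` satisfies
the constraint `∑_{i ∈ F} x* i = c`, every feasible `x` has total ℓ₁ adjustment at
least `|Δ|`, and `x*` achieves exactly `|Δ|`; hence `x*` is an ℓ₁ minimizer. -/
theorem incremental_update_l1_minimizer
    {I : Type*} [Fintype I] [DecidableEq I]
    (F : Finset I) (hF : F.Nonempty) (a : I → ℝ) (c : ℝ) :
    (∑ i ∈ F, incrementalUpdate F a c i = c) ∧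
    (∀ x : I → ℝ, (∑ i ∈ F, x i = c) →
        |c - ∑ j ∈ F, a j| ≤ ∑ i, |x i - a i|) ∧
    (∑ i, |incrementalUpdate F a c i - a i| = |c - ∑ j ∈ F, a j|) :=
  ⟨sum_incrementalUpdate a c hF,
    fun x hx => hx ▸ F.abs_sum_sub_sum_le_sum_abs_sub x a,
    sum_abs_incrementalUpdate_sub a c hF⟩
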